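/- arXiv:math/0005146 — 5 statements merged into one kernel-verified Lean document; each statement's English description precedes it below -/
import Mathlib

section
/- An irreducible cubic hypersurface X ⊂ P^{n+1} over a perfect field k which has a k-point also has a smooth k-point, provided X is not a cone and n ≥ 2. -/
/-!
Let `p` be a `k`-point of the cubic `f`. If `p` is singular, Taylor expansion gives
`f (x + s • p) = f x + s * D_p f (x)`, where `D_p f = ∑ pᵢ ∂ᵢ f` is the polar quadric of `p`.
If `D_p f = 0`, then `f` is invariant under translation by `p`, even over the algebraic closure,
so `f` is a cone with vertex `p`. Otherwise, since a nonzero quadratic form over a field takes a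
nonzero value, `D_p f (v) ≠ 0` for some `v`; then `f` restricted to the line `v + s • p` is affine
with nonzero slope, and its zero `x` is a `k`-point where the derivative in direction `p` is
`D_p f (v) ≠ 0`.
-/

namespace MvPolynomial

section CommSemiring

variable {R σ : Type*} [CommSemiring R]

theorem IsHomogeneous.eval_smul {φ : MvPolynomial σ R} {n : ℕ} (hφ : φ.IsHomogeneous n)
    (a : R) (x : σ → R) : eval (a • x) φ = a ^ n * eval x φ := by
  rw [eval_eq, eval_eq, Finset.mul_sum]
  refine Finset.sum_congr rfl fun d hd => ?_
  have hdeg : ∑ i ∈ d.support, d i = n := by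
    have h : d.degree = n := by
      rw [Finsupp.degree_eq_weight_one]
      exact hφ (mem_support_iff.mp hd)
    rwa [Finsupp.degree_apply] at h
  simp only [Pi.smul_apply, smul_eq_mul, mul_pow, Finset.prod_mul_distrib,
    Finset.prod_pow_eq_pow_sum, hdeg]
  ring

@[elab_as_elim]
theorem IsHomogeneous.induction_on_monomial {motive : MvPolynomial σ R → Prop}
    {φ : MvPolynomial σ R} {n : ℕ} (hφ : φ.IsHomogeneous n) (zero : motive 0)
    (add : ∀ p q, motive p → motive q → motive (p + q))
    (monomial : ∀ d c, d.degree = n → motive (monomial d c)) : motive φ := by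
  rw [φ.as_sum]
  refine Finset.sum_induction _ motive add zero fun d hd => monomial _ _ ?_
  rw [Finsupp.degree_eq_weight_one]
  exact hφ (mem_support_iff.mp hd)

theorem _root_.Finsupp.exists_eq_single_add_single_add_single {d : σ →₀ ℕ} (hd : d.degree = 3) :
    ∃ a b e : σ, d = Finsupp.single a 1 + Finsupp.single b 1 + Finsupp.single e 1 := by
  classical
  have hcard : Multiset.card (Finsupp.toMultiset d) = 3 := by
    rwa [Finsupp.card_toMultiset]
  obtain ⟨a, b, e, habe⟩ := Multiset.card_eq_three.mp hcard
  refine ⟨a, b, e, ?_⟩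
  rw [← Finsupp.toMultiset_toFinsupp d, habe]
  simp [Multiset.insert_eq_cons, ← Multiset.singleton_add, Multiset.toFinsupp_add, add_assoc]

variable [Fintype σ]

noncomputable def dirDeriv (w : σ → R) (φ : MvPolynomial σ R) : MvPolynomial σ R :=
  ∑ i, C (w i) * pderiv i φ

theorem eval_dirDeriv (w x : σ → R) (φ : MvPolynomial σ R) :
    eval x (dirDeriv w φ) = ∑ i, w i * eval x (pderiv i φ) := by
  simp [dirDeriv]

theorem dirDeriv_X (w : σ → R) (j : σ) : dirDeriv w (X j) = C (w j) := by
  classical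
  simp [dirDeriv, pderiv_X, Pi.single_apply]

theorem dirDeriv_C (w : σ → R) (c : R) : dirDeriv w (C c) = 0 := by
  simp [dirDeriv]

theorem dirDeriv_mul (w : σ → R) (φ ψ : MvPolynomial σ R) :
    dirDeriv w (φ * ψ) = dirDeriv w φ * ψ + φ * dirDeriv w ψ := by
  simp only [dirDeriv, pderiv_mul, mul_add, Finset.sum_add_distrib, Finset.sum_mul, Finset.mul_sum]
  congr 1 <;> exact Finset.sum_congr rfl fun _ _ => by ring

theorem IsHomogeneous.dirDeriv {φ : MvPolynomial σ R} {n : ℕ} (hφ : φ.IsHomogeneous n)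
    (w : σ → R) : (dirDeriv w φ).IsHomogeneous (n - 1) :=
  IsHomogeneous.sum _ _ _ fun i _ => hφ.pderiv.C_mul (w i)

theorem map_dirDeriv {S : Type*} [CommSemiring S] (f : R →+* S) (w : σ → R)
    (φ : MvPolynomial σ R) : map f (dirDeriv w φ) = dirDeriv (f ∘ w) (map f φ) := by
  simp [dirDeriv, pderiv_map]

theorem eval_add_of_isHomogeneous_three {φ : MvPolynomial σ R} (hφ : φ.IsHomogeneous 3)
    (x w : σ → R) :
    eval (x + w) φ = eval x φ + eval x (dirDeriv w φ) + eval w (dirDeriv x φ) + eval w φ := by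
  classical
  refine hφ.induction_on_monomial (by simp [dirDeriv]) (fun p q hp hq => ?_) fun d c hd => ?_
  · simp only [dirDeriv, map_add, mul_add, Finset.sum_add_distrib] at *
    rw [hp, hq]
    ring
  · obtain ⟨a, b, e, rfl⟩ := Finsupp.exists_eq_single_add_single_add_single hd
    have : monomial (Finsupp.single a 1 + Finsupp.single b 1 + Finsupp.single e 1) c =
        C c * (X a * X b * X e) := by
      simp only [C_apply, X, monomial_mul, zero_add, mul_one]
    simp only [this, dirDeriv_C, dirDeriv_mul, dirDeriv_X, map_add, map_mul, map_zero, eval_C,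
      eval_X, Pi.add_apply]
    ring

theorem eval_add_smul_of_singular {φ : MvPolynomial σ R} (hφ : φ.IsHomogeneous 3) {p : σ → R}
    (hp : eval p φ = 0) (hdp : ∀ i, eval p (pderiv i φ) = 0) (x : σ → R) (s : R) :
    eval (x + s • p) φ = eval x φ + s * eval x (dirDeriv p φ) := by
  have hsp : eval (s • p) φ = 0 := by rw [hφ.eval_smul, hp, mul_zero]
  have hsp' : eval (s • p) (dirDeriv x φ) = 0 := by
    simp [(hφ.dirDeriv x).eval_smul, eval_dirDeriv, hdp]
  have hs : eval x (dirDeriv (s • p) φ) = s * eval x (dirDeriv p φ) := by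
    simp [eval_dirDeriv, Finset.mul_sum, mul_assoc]
  rw [eval_add_of_isHomogeneous_three hφ, hsp, hsp', hs, add_zero, add_zero]

theorem eval_map_add_smul_of_dirDeriv_eq_zero {S : Type*} [CommSemiring S] (g : R →+* S)
    {φ : MvPolynomial σ R} (hφ : φ.IsHomogeneous 3) {p : σ → R} (hp : eval p φ = 0)
    (hdp : ∀ i, eval p (pderiv i φ) = 0) (hφp : dirDeriv p φ = 0) (x : σ → S) (t : S) :
    eval (x + t • (g ∘ p)) (map g φ) = eval x (map g φ) := by
  have hgp : eval (g ∘ p) (map g φ) = 0 := by rw [← map_eval, hp, map_zero]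
  have hgp' (i : σ) : eval (g ∘ p) (pderiv i (map g φ)) = 0 := by
    rw [pderiv_map, ← map_eval, hdp, map_zero]
  rw [eval_add_smul_of_singular (hφ.map g) hgp hgp', ← map_dirDeriv, hφp, map_zero, map_zero,
    mul_zero, add_zero]

end CommSemiring

theorem exists_smooth_zero_of_eval_dirDeriv_ne_zero {K σ : Type*} [Field K] [Fintype σ]
    {φ : MvPolynomial σ K} (hφ : φ.IsHomogeneous 3) {p v : σ → K} (hp : eval p φ = 0)
    (hdp : ∀ i, eval p (pderiv i φ) = 0) (hv : eval v (dirDeriv p φ) ≠ 0) :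
    ∃ x : σ → K, x ≠ 0 ∧ eval x φ = 0 ∧ ∃ i, eval x (pderiv i φ) ≠ 0 := by
  -- `φ` is affine along every line `v + s • p`; `x` is its zero there and `q` its slope.
  have line := eval_add_smul_of_singular hφ hp hdp
  generalize hq : eval v (dirDeriv p φ) = q at hv
  set x := v + (-(eval v φ / q)) • p
  have hx : eval x φ = 0 := by
    rw [line, hq]
    field_simp
    ring
  have hpx : eval x (dirDeriv p φ) = q := by
    have h := line x 1
    rw [show x + (1 : K) • p = v + (1 - eval v φ / q) • p by simp only [x]; module, line, hq, hx,
      zero_add, one_mul] at h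
    rw [← h, sub_mul, div_mul_cancel₀ _ hv]
    ring
  obtain ⟨i, -, hi⟩ := Finset.exists_ne_zero_of_sum_ne_zero (eval_dirDeriv p x φ ▸ hpx ▸ hv)
  refine ⟨x, ?_, hx, i, right_ne_zero_of_mul hi⟩
  intro hx0
  apply hv
  rw [← hpx, hx0, ← zero_smul K (0 : σ → K), (hφ.dirDeriv p).eval_smul]
  simp

end MvPolynomial

open MvPolynomial

theorem smooth_point_of_point_cubic_general
    {k : Type*} [Field k] {n : ℕ}
    (f : MvPolynomial (Fin (n + 2)) k) (hf3 : f.IsHomogeneous 3)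
    (hnotcone : ¬ ∃ p : Fin (n + 2) → AlgebraicClosure k, p ≠ 0 ∧
      ∀ (x : Fin (n + 2) → AlgebraicClosure k) (t : AlgebraicClosure k),
        MvPolynomial.eval (x + t • p)
            (MvPolynomial.map (algebraMap k (AlgebraicClosure k)) f) =
          MvPolynomial.eval x (MvPolynomial.map (algebraMap k (AlgebraicClosure k)) f))
    (hpt : ∃ x : Fin (n + 2) → k, x ≠ 0 ∧ MvPolynomial.eval x f = 0) :
    ∃ x : Fin (n + 2) → k, x ≠ 0 ∧ MvPolynomial.eval x f = 0 ∧
      ∃ i : Fin (n + 2), MvPolynomial.eval x (MvPolynomial.pderiv i f) ≠ 0 := by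
  obtain ⟨p, hp0, hfp⟩ := hpt
  by_cases hsmooth : ∃ i, eval p (pderiv i f) ≠ 0
  · exact ⟨p, hp0, hfp, hsmooth⟩
  have hsing : ∀ i, eval p (pderiv i f) = 0 := not_exists_not.mp hsmooth
  by_cases hvertex : dirDeriv p f = 0
  · refine absurd ⟨algebraMap k _ ∘ p, ?_,
      eval_map_add_smul_of_dirDeriv_eq_zero _ hf3 hfp hsing hvertex⟩ hnotcone
    exact fun h => hp0 (funext fun i => by simpa using congrFun h i)
  obtain ⟨v, hv⟩ : ∃ v, eval v (dirDeriv p f) ≠ 0 := by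
    by_contra! h
    refine hvertex ((hf3.dirDeriv p).eq_zero_of_forall_eval_eq_zero_of_le_card h ?_)
    simpa using Cardinal.two_le_iff.mpr ⟨(0 : k), 1, zero_ne_one⟩
  exact exists_smooth_zero_of_eval_dirDeriv_ne_zero hf3 hfp hsing hv

/-- Let `k` be a perfect field and `X ⊂ ℙ^{n+1}` an irreducible cubic hypersurface of
dimension `n ≥ 2` over `k` (defined by an irreducible homogeneous cubic `f` in the
`n + 2` homogeneous coordinates) which is not a cone (over the algebraic closure there
is no vertex point `p ≠ 0` with `f(x + t·p) = f(x)` for all `x, t`).  If `X` has a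
`k`-point, then `X` has a smooth `k`-point, i.e. a nonzero `x ∈ k^{n+2}` with
`f(x) = 0` at which some partial derivative of `f` is nonzero. -/
theorem smooth_point_of_point_cubic
    {k : Type*} [Field k] [PerfectField k] {n : ℕ} (hn : 2 ≤ n)
    (f : MvPolynomial (Fin (n + 2)) k) (hf3 : f.IsHomogeneous 3) (hirr : Irreducible f)
    (hnotcone : ¬ ∃ p : Fin (n + 2) → AlgebraicClosure k, p ≠ 0 ∧
      ∀ (x : Fin (n + 2) → AlgebraicClosure k) (t : AlgebraicClosure k),
        MvPolynomial.eval (x + t • p)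
            (MvPolynomial.map (algebraMap k (AlgebraicClosure k)) f) =
          MvPolynomial.eval x (MvPolynomial.map (algebraMap k (AlgebraicClosure k)) f))
    (hpt : ∃ x : Fin (n + 2) → k, x ≠ 0 ∧ MvPolynomial.eval x f = 0) :
    ∃ x : Fin (n + 2) → k, x ≠ 0 ∧ MvPolynomial.eval x f = 0 ∧
      ∃ i : Fin (n + 2), MvPolynomial.eval x (MvPolynomial.pderiv i f) ≠ 0 :=
  smooth_point_of_point_cubic_general f hf3 hnotcone hpt
end

section
/- Over a field k of characteristic 3, there are no polynomials f, g, h ∈ k[t] with h ≠ 0 and gcd(f,g) = 1 satisfying f(f−g)(f+g) = t·h^3. -/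
open Polynomial

/-- In a PID which is a polynomial ring over an algebraically closed field,
coprime factors of a cube are cubes. -/
private lemma cube_of_coprime {k : Type*} [Field k] [IsAlgClosed k]
    (a b c : Polynomial k) (hab : IsCoprime a b) (h : a * b = c ^ 3) :
    ∃ d : Polynomial k, a = d ^ 3 := by
  obtain ⟨d, u, hdu⟩ := exists_associated_pow_of_mul_eq_pow' hab h
  have hu : IsUnit (u : Polynomial k) := u.isUnit
  rw [Polynomial.isUnit_iff] at hu
  obtain ⟨r, hr, hru⟩ := hu
  obtain ⟨s, hs⟩ := IsAlgClosed.exists_pow_nat_eq r (n := 3) (by norm_num)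
  refine ⟨d * Polynomial.C s, ?_⟩
  rw [mul_pow, ← Polynomial.C_pow, hs, hru, hdu]

private lemma key {k : Type*} [Field k] [IsAlgClosed k] [CharP k 3]
    (u v w h : Polynomial k) (hh : h ≠ 0) (hsum : u + v + w = 0)
    (huv : IsCoprime u v) (huw : IsCoprime u w) (hvw : IsCoprime v w)
    (heq : u * v * w = Polynomial.X * h ^ 3) (hXu : Polynomial.X ∣ u) : False := by
  have hX0 : (Polynomial.X : Polynomial k) ≠ 0 := Polynomial.X_ne_zero
  have hne : u * v * w ≠ 0 := by
    rw [heq]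
    exact mul_ne_zero hX0 (pow_ne_zero _ hh)
  have hu0 : u ≠ 0 := fun h0 => hne (by simp [h0])
  obtain ⟨u₁, rfl⟩ := hXu
  have hu₁0 : u₁ ≠ 0 := fun h0 => hu0 (by simp [h0])
  have heq' : u₁ * v * w = h ^ 3 := by
    apply mul_left_cancel₀ hX0
    rw [← heq]; ring
  -- coprimality of u₁ with v, w
  have hu₁v : IsCoprime u₁ v := huv.of_isCoprime_of_dvd_left ⟨Polynomial.X, by ring⟩
  have hu₁w : IsCoprime u₁ w := huw.of_isCoprime_of_dvd_left ⟨Polynomial.X, by ring⟩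
  obtain ⟨a, ha⟩ := cube_of_coprime u₁ (v * w) h (hu₁v.mul_right hu₁w) (by rw [← heq']; ring)
  obtain ⟨b, hb⟩ := cube_of_coprime v (u₁ * w) h (hu₁v.symm.mul_right hvw) (by rw [← heq']; ring)
  obtain ⟨c, hc⟩ := cube_of_coprime w (u₁ * v) h (hu₁w.symm.mul_right hvw.symm) (by rw [← heq']; ring)
  have key : (b + c) ^ 3 = Polynomial.X * (-a) ^ 3 := by
    have : v + w = -(Polynomial.X * u₁) := by linear_combination hsum
    rw [add_pow_char _ _ _ , ← hb, ← hc, this, ha]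
    ring
  have ha0 : a ≠ 0 := fun h0 => hu₁0 (by rw [ha, h0]; ring)
  have hbc0 : b + c ≠ 0 := by
    intro h0
    rw [h0] at key
    exact mul_ne_zero hX0 (pow_ne_zero _ (neg_ne_zero.mpr ha0)) (by rw [← key]; ring)
  have hdeg : 3 * (b + c).natDegree = 1 + 3 * a.natDegree := by
    have := congrArg Polynomial.natDegree key
    rwa [Polynomial.natDegree_pow, Polynomial.natDegree_mul hX0
      (pow_ne_zero _ (neg_ne_zero.mpr ha0)), Polynomial.natDegree_pow,
      Polynomial.natDegree_X, Polynomial.natDegree_neg] at this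
  omega

/-- Over an algebraically closed field `k` of characteristic 3, there are no polynomials
`f, g, h ∈ k[t]` with `h ≠ 0`, `f` and `g` coprime, and `f(f−g)(f+g) = t·h³`. -/
theorem no_solution_f_fg_fg_cube
    {k : Type*} [Field k] [IsAlgClosed k] [CharP k 3] :
    ¬ ∃ f g h : Polynomial k, h ≠ 0 ∧ IsCoprime f g ∧
      f * (f - g) * (f + g) = Polynomial.X * h ^ 3 := by
  rintro ⟨f, g, h, hh, hfg, heq⟩
  have h3 : (3 : Polynomial k) = 0 := by
    have := CharP.cast_eq_zero (Polynomial k) 3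
    simpa using this
  set u := f with hu
  set v := f - g with hv
  set w := f + g with hw
  have hsum : u + v + w = 0 := by
    simp only [hu, hv, hw]
    linear_combination f * h3
  obtain ⟨x, y, hxy⟩ := hfg
  have huv : IsCoprime u v := ⟨x + y, -y, by linear_combination hxy⟩
  have huw : IsCoprime u w := ⟨x - y, y, by linear_combination hxy⟩
  have hvw : IsCoprime v w := ⟨2 * x - 2 * y, 2 * x + 2 * y, by
    linear_combination 4 * hxy + h3⟩
  have hXdvd : Polynomial.X ∣ u * v * w := heq ▸ Dvd.intro _ rfl
  rcases (Polynomial.prime_X.dvd_mul.mp hXdvd) with hd | hd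
  · rcases Polynomial.prime_X.dvd_mul.mp hd with hd' | hd'
    · exact key u v w h hh hsum huv huw hvw heq hd'
    · exact key v u w h hh (by linear_combination hsum) huv.symm hvw huw
        (by linear_combination heq) hd'
  · exact key w u v h hh (by linear_combination hsum) huw.symm hvw.symm huv
      (by linear_combination heq) hd
end

section
/- Let k be a field of characteristic 3, K = k(t_1,...,t_n), and Y ⊂ P^{n+1} the cubic hypersurface y^3 − y z^2 = Σ t_i x_i^3. Then the only K-points of Y are (0:1:0:...:0), (1:1:0:...:0), and (1:−1:0:...:0). -/
/-!
After clearing denominators, differentiate a polynomial solution `Y³ − Y Z² = ∑ Xᵢ Wᵢ³` by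
`∂ᵢ`: in characteristic 3 cubes have zero derivative, so `Wᵢ³ = −∂ᵢ(Y Z²)`, which is divisible
by `Z`. Hence every prime factor of `Z` divides all `Wᵢ` and then `Y`, and can be cancelled from
the equation. This reduces to `Z = 1`, where `Wᵢ³ = −∂ᵢ Y` turns the equation into
`Y³ = Y − ∑ Xᵢ ∂ᵢ Y`; the right side has degree at most `deg Y`, so `Y` is constant and all
`Wᵢ` vanish.
-/

namespace MvPolynomial

variable {σ R : Type*}

theorem pderiv_pow_char [CommSemiring R] (p : ℕ) [CharP R p] (i : σ) (f : MvPolynomial σ R) :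
    pderiv i (f ^ p) = 0 := by
  rw [pderiv_pow, CharP.cast_eq_zero, zero_mul, zero_mul]

theorem pderiv_sum_X_mul_pow_char [CommSemiring R] [Fintype σ] (p : ℕ) [CharP R p]
    (f : σ → MvPolynomial σ R) (j : σ) :
    pderiv j (∑ i, X i * f i ^ p) = f j ^ p := by
  classical
  simp [Pi.single_apply]

theorem coeff_X_mul_pderiv [CommSemiring R] (i : σ) (f : MvPolynomial σ R) (m : σ →₀ ℕ) :
    coeff m (X i * pderiv i f) = m i * coeff m f := by
  classical
  rw [coeff_X_mul', coeff_pderiv]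
  split_ifs with h
  · have h1 : 1 ≤ m i := Nat.one_le_iff_ne_zero.mpr (Finsupp.mem_support_iff.mp h)
    rw [tsub_add_cancel_of_le (Finsupp.single_le_iff.mpr h1), Finsupp.tsub_apply,
      Finsupp.single_eq_same, ← Nat.cast_add_one, Nat.sub_add_cancel h1, mul_comm]
  · simp_all

theorem support_sum_X_mul_pderiv_subset [CommSemiring R] [Fintype σ] (f : MvPolynomial σ R) :
    (∑ i, X i * pderiv i f).support ⊆ f.support := by
  intro m
  simp only [mem_support_iff, coeff_sum, coeff_X_mul_pderiv, ← Finset.sum_mul]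
  exact fun h h0 => h (by rw [h0, mul_zero])

theorem totalDegree_pow_of_isDomain [CommRing R] [IsDomain R] {f : MvPolynomial σ R}
    (hf : f ≠ 0) (n : ℕ) : (f ^ n).totalDegree = n * f.totalDegree := by
  induction n with
  | zero => simp
  | succ n ih =>
    rw [pow_succ, totalDegree_mul_of_isDomain (pow_ne_zero n hf) hf, ih]
    ring

theorem dvd_pderiv_mul_sq [CommSemiring R] (i : σ) (Y Z : MvPolynomial σ R) :
    Z ∣ pderiv i (Y * Z ^ 2) := by
  rw [pderiv_mul, pderiv_pow]
  exact ⟨pderiv i Y * Z + 2 * Y * pderiv i Z, by push_cast; ring⟩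

theorem cube_sub_mul_sq_eq_of_mul [CommRing R] [IsDomain R] [Fintype σ]
    {c Y Z : MvPolynomial σ R} {W : σ → MvPolynomial σ R} (hc : c ≠ 0)
    (h : (c * Y) ^ 3 - (c * Y) * (c * Z) ^ 2 = ∑ i, X i * (c * W i) ^ 3) :
    Y ^ 3 - Y * Z ^ 2 = ∑ i, X i * W i ^ 3 := by
  refine mul_left_cancel₀ (pow_ne_zero 3 hc) ?_
  rw [Finset.mul_sum]
  convert h using 1
  · ring
  · exact Finset.sum_congr rfl fun i _ => by ring

section CubicCharThree

variable [CommRing R] [CharP R 3] [Fintype σ]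

theorem cube_eq_neg_pderiv_of_cube_sub_mul_sq_eq {Y Z : MvPolynomial σ R}
    {W : σ → MvPolynomial σ R} (h : Y ^ 3 - Y * Z ^ 2 = ∑ i, X i * W i ^ 3) (j : σ) :
    W j ^ 3 = -pderiv j (Y * Z ^ 2) := by
  have h' := congrArg (pderiv j) h
  rw [map_sub, pderiv_pow_char, pderiv_sum_X_mul_pow_char] at h'
  linear_combination -h'

theorem eq_zero_of_cube_sub_eq_sum [IsDomain R] {Y : MvPolynomial σ R}
    {W : σ → MvPolynomial σ R} (h : Y ^ 3 - Y = ∑ i, X i * W i ^ 3) : W = 0 := by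
  have hW (j : σ) : W j ^ 3 = -pderiv j Y := by
    simpa using cube_eq_neg_pderiv_of_cube_sub_mul_sq_eq (Z := 1) (by simpa using h) j
  have hY3 : Y ^ 3 = Y - ∑ i, X i * pderiv i Y := by
    rw [sub_eq_iff_eq_add'.mp h]
    simp [hW, sub_eq_add_neg]
  have hdeg : Y.totalDegree = 0 := by
    by_cases hY : Y = 0
    · simp [hY]
    have hle : (Y ^ 3).totalDegree ≤ Y.totalDegree := hY3 ▸ (totalDegree_sub _ _).trans
      (max_le le_rfl (totalDegree_le_of_support_subset (support_sum_X_mul_pderiv_subset Y)))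
    rw [totalDegree_pow_of_isDomain hY] at hle
    omega
  rw [totalDegree_eq_zero_iff_eq_C] at hdeg
  funext j
  exact pow_eq_zero_iff three_ne_zero |>.mp (by rw [hW, hdeg, pderiv_C, neg_zero])

theorem eq_zero_of_cube_sub_mul_sq_eq_sum [IsDomain R] [UniqueFactorizationMonoid R]
    {Y Z : MvPolynomial σ R} {W : σ → MvPolynomial σ R}
    (h : Y ^ 3 - Y * Z ^ 2 = ∑ i, X i * W i ^ 3) : W = 0 := by
  induction Z using WfDvdMonoid.induction_on_irreducible generalizing Y W with
  | zero =>
    funext j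
    simpa using cube_eq_neg_pderiv_of_cube_sub_mul_sq_eq h j
  | unit u hu =>
    obtain ⟨Y, rfl⟩ := hu.dvd (a := Y)
    choose W' hW' using fun i => hu.dvd (a := W i)
    obtain rfl : W = fun i => u * W' i := by funext i; exact hW' i
    have hW' := eq_zero_of_cube_sub_eq_sum
      (by simpa using cube_sub_mul_sq_eq_of_mul (Z := 1) hu.ne_zero (by simpa using h))
    funext i
    simp [hW']
  | mul a p _ hp ih =>
    have hp' := UniqueFactorizationMonoid.irreducible_iff_prime.mp hp
    have hpW (i : σ) : p ∣ W i := by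
      refine hp'.dvd_of_dvd_pow (n := 3) ?_
      rw [cube_eq_neg_pderiv_of_cube_sub_mul_sq_eq h i, dvd_neg]
      exact (dvd_mul_right p a).trans (dvd_pderiv_mul_sq i Y _)
    have hpY : p ∣ Y := by
      refine hp'.dvd_of_dvd_pow (n := 3) ?_
      rw [sub_eq_iff_eq_add.mp h]
      refine dvd_add (Finset.dvd_sum fun i _ => ?_) ?_
      · exact (dvd_pow (hpW i) three_ne_zero).mul_left _
      · exact (dvd_pow (dvd_mul_right p a) two_ne_zero).mul_left _
    obtain ⟨Y, rfl⟩ := hpY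
    choose W' hW' using hpW
    obtain rfl : W = fun i => p * W' i := by funext i; exact hW' i
    have hW' := ih (cube_sub_mul_sq_eq_of_mul hp.ne_zero h)
    funext i
    simp [hW']

theorem eq_zero_of_cube_sub_mul_sq_eq_sum_algebraMap [IsDomain R] [UniqueFactorizationMonoid R]
    {F : Type*} [Field F] [Algebra (MvPolynomial σ R) F] [IsFractionRing (MvPolynomial σ R) F]
    {y z : F} {x : σ → F}
    (h : y ^ 3 - y * z ^ 2 = ∑ i, algebraMap (MvPolynomial σ R) F (X i) * x i ^ 3) : x = 0 := by
  obtain ⟨b, hb⟩ := IsLocalization.exist_integer_multiples_of_finite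
    (nonZeroDivisors (MvPolynomial σ R)) (Sum.elim ![y, z] x)
  obtain ⟨Y, hY⟩ := hb (.inl 0)
  obtain ⟨Z, hZ⟩ := hb (.inl 1)
  choose W hW using fun i => hb (.inr i)
  simp only [Sum.elim_inl, Sum.elim_inr, Matrix.cons_val_zero, Matrix.cons_val_one,
    Algebra.smul_def] at hY hZ hW
  set B := algebraMap (MvPolynomial σ R) F b
  have hpoly : Y ^ 3 - Y * Z ^ 2 = ∑ i, X i * W i ^ 3 := by
    apply IsFractionRing.injective (MvPolynomial σ R) F
    simp only [map_sub, map_pow, map_mul, map_sum, hY, hZ, hW]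
    calc (B * y) ^ 3 - B * y * (B * z) ^ 2 = B ^ 3 * (y ^ 3 - y * z ^ 2) := by ring
      _ = _ := by
        rw [h, Finset.mul_sum]
        exact Finset.sum_congr rfl fun i _ => by ring
  have hB : B ≠ 0 := IsFractionRing.to_map_ne_zero_of_mem_nonZeroDivisors b.2
  funext i
  simpa [eq_zero_of_cube_sub_mul_sq_eq_sum hpoly, hB] using (hW i).symm

end CubicCharThree

end MvPolynomial

theorem K_points_of_char3_cubic_general
    {k : Type*} [Field k] [CharP k 3] {n : ℕ}
    (K : Type*) [Field K] (e : FractionRing (MvPolynomial (Fin n) k) ≃+* K)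
    (t : Fin n → K) (ht : ∀ i, t i =
      e (algebraMap (MvPolynomial (Fin n) k) (FractionRing (MvPolynomial (Fin n) k))
        (MvPolynomial.X i)))
    (y z : K) (x : Fin n → K)
    (heq : y ^ 3 - y * z ^ 2 = ∑ i, t i * x i ^ 3) :
    x = 0 ∧ (y = 0 ∨ y = z ∨ y = -z) := by
  have hx : x = 0 := by
    have h := congrArg e.symm heq
    simp only [map_sub, map_pow, map_mul, map_sum, ht, RingEquiv.symm_apply_apply] at h
    funext i
    simpa using congrFun (MvPolynomial.eq_zero_of_cube_sub_mul_sq_eq_sum_algebraMap h) i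
  refine ⟨hx, ?_⟩
  have hfac : y * ((y - z) * (y + z)) = 0 := by
    simp only [hx, Pi.zero_apply] at heq
    linear_combination (by simpa using heq : y ^ 3 - y * z ^ 2 = 0)
  simpa [mul_eq_zero, sub_eq_zero, add_eq_zero_iff_eq_neg] using hfac

/-- Let `k` be an algebraically closed field of characteristic 3 and
`K = k(t_1,…,t_n)` a purely transcendental extension.  The only `K`-points of the
cubic hypersurface `Y ⊂ ℙ^{n+1}`, `y³ − y z² = ∑ tᵢ xᵢ³`, are `(0:1:0:…:0)`,
`(1:1:0:…:0)` and `(1:−1:0:…:0)`: every nonzero solution `(y, z, x)` over `K` has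
`x = 0` and `y = 0`, `y = z`, or `y = −z`. -/
theorem K_points_of_char3_cubic
    {k : Type*} [Field k] [IsAlgClosed k] [CharP k 3] {n : ℕ}
    (K : Type*) [Field K] (e : FractionRing (MvPolynomial (Fin n) k) ≃+* K)
    (t : Fin n → K) (ht : ∀ i, t i =
      e (algebraMap (MvPolynomial (Fin n) k) (FractionRing (MvPolynomial (Fin n) k))
        (MvPolynomial.X i)))
    (y z : K) (x : Fin n → K) (hnz : ¬ (y = 0 ∧ z = 0 ∧ x = 0))
    (heq : y ^ 3 - y * z ^ 2 = ∑ i, t i * x i ^ 3) :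
    x = 0 ∧ (y = 0 ∨ y = z ∨ y = -z) :=
  K_points_of_char3_cubic_general K e t ht y z x heq
end

section
/- Let char k = 2 and f = Σ_j ℓ_j(y) x_j^2 + g(y) a homogeneous cubic where ℓ_j are linear forms and g is a cubic in the y-variables, with at least one x-variable present. Then the hypersurface X = {f = 0} ⊂ P^{n+1} is singular over the algebraic closure. -/
/-!
In characteristic 2 the partials `∂f/∂x_j = 2 ℓ_j x_j` vanish identically, and Euler's relation
`3 f = ∑ v ∂f/∂v` with `3 = 1` makes `f` vanish wherever its gradient does. So the singular points
are the common zeros of the `r` quadrics `∂f/∂y_i` in `m + 1 + r > r` variables. They vanish at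
the origin; if that were their only common zero, the Nullstellensatz would make its maximal ideal,
of height `m + 1 + r`, a minimal prime over `r` elements, against Krull's height theorem.
-/

open MvPolynomial

namespace MvPolynomial

variable {σ : Type*}

section Field

variable {K : Type*} [Field K]

noncomputable def translate (a : σ → K) : MvPolynomial σ K ≃ₐ[K] MvPolynomial σ K :=
  AlgEquiv.ofAlgHom (aeval fun i => X i + C (a i)) (aeval fun i => X i - C (a i))
    (by ext; simp) (by ext; simp)

lemma eval_translate (a x : σ → K) (p : MvPolynomial σ K) :
    eval x (translate a p) = eval (x + a) p := by
  induction p using MvPolynomial.induction_on <;> simp_all [translate]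

lemma comap_translate_vanishingIdeal_singleton (a x : σ → K) :
    (vanishingIdeal K {x}).comap (translate a).toRingEquiv = vanishingIdeal K {x + a} := by
  ext p
  simp [eval_translate]

lemma height_eq_natCard_of_isMaximal [IsAlgClosed K] [Finite σ] {M : Ideal (MvPolynomial σ K)}
    (hM : M.IsMaximal) : M.height = Nat.card σ := by
  have hdim : ringKrullDim (MvPolynomial σ K) = Nat.card σ := by simp
  have : FiniteRingKrullDim (MvPolynomial σ K) := by
    rw [finiteRingKrullDim_iff_ne_bot_and_top, hdim]
    exact ⟨WithBot.natCast_ne_bot _, WithBot.coe_injective.ne (ENat.natCast_ne_top _)⟩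
  -- Some maximal ideal has height `dim K[σ]`, and translations act transitively on points.
  obtain ⟨M₀, hM₀, hM₀_height⟩ := Ideal.exists_isMaximal_height (R := MvPolynomial σ K)
  obtain ⟨x, rfl⟩ := eq_vanishingIdeal_singleton_of_isMaximal K hM
  obtain ⟨x₀, rfl⟩ := eq_vanishingIdeal_singleton_of_isMaximal K hM₀
  rw [← (translate (x₀ - x)).toRingEquiv.height_comap, comap_translate_vanishingIdeal_singleton,
    add_sub_cancel]
  exact_mod_cast hM₀_height.trans hdim

lemma exists_ne_forall_eval_eq_zero [IsAlgClosed K] [Finite σ] {ι : Type*} [Fintype ι]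
    (F : ι → MvPolynomial σ K) (hcard : Fintype.card ι < Nat.card σ) {a : σ → K}
    (ha : ∀ i, eval a (F i) = 0) : ∃ x ≠ a, ∀ i, eval x (F i) = 0 := by
  classical
  by_contra! h
  set I := Ideal.span (Finset.univ.image F : Set (MvPolynomial σ K))
  have hzero : zeroLocus K I = {a} := by
    ext x
    simp only [I, zeroLocus_span, Finset.coe_image, Finset.coe_univ, Set.image_univ,
      Set.forall_mem_range, Set.mem_ofPred_eq, Set.mem_singleton_iff]
    refine ⟨fun hx => by_contra fun hxa => ?_, fun hx => hx ▸ ha⟩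
    obtain ⟨i, hi⟩ := h x hxa
    exact hi (hx i)
  have hM : (vanishingIdeal K {a}).IsMaximal :=
    isMaximal_iff_eq_vanishingIdeal_singleton.2 ⟨a, rfl⟩
  have hmin : vanishingIdeal K {a} ∈ I.minimalPrimes := by
    rw [← Ideal.radical_minimalPrimes, ← vanishingIdeal_zeroLocus_eq_radical (K := K), hzero,
      Ideal.minimalPrimes_eq_subsingleton_self]
    rfl
  have hle := Ideal.height_le_card_of_mem_minimalPrimes_span_finset hmin
  rw [height_eq_natCard_of_isMaximal hM] at hle
  have : Nat.card σ ≤ Fintype.card ι :=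
    Nat.cast_le.mp (hle.trans (Nat.cast_le.mpr Finset.card_image_le))
  omega

end Field

section CommRing

variable {R : Type*} [CommRing R]

lemma IsHomogeneous.eval_eq_zero_of_forall_eval_pderiv_eq_zero [NoZeroDivisors R] [Fintype σ]
    {φ : MvPolynomial σ R} {n : ℕ} (hφ : φ.IsHomogeneous n) (hn : (n : R) ≠ 0) {x : σ → R}
    (hx : ∀ i, eval x (pderiv i φ) = 0) : eval x φ = 0 := by
  have h := congrArg (eval x) hφ.sum_X_mul_pderiv
  simp only [map_sum, map_mul, hx, mul_zero, Finset.sum_const_zero, nsmul_eq_mul,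
    map_natCast] at h
  exact (mul_eq_zero.mp h.symm).resolve_left hn

lemma IsHomogeneous.eval_zero_pderiv {φ : MvPolynomial σ R} {n : ℕ} (hφ : φ.IsHomogeneous n)
    (hn : n ≠ 1) (i : σ) : eval 0 (pderiv i φ) = 0 := by
  classical
  rw [eval_zero, constantCoeff_eq, coeff_pderiv, zero_add,
    hφ.coeff_eq_zero (by simpa using hn.symm), zero_mul]

lemma pderiv_inl_rename_inr {τ : Type*} (j : σ) (q : MvPolynomial τ R) :
    pderiv (Sum.inl j) (rename Sum.inr q) = 0 := by
  classical
  refine pderiv_eq_zero_of_notMem_vars fun hj => ?_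
  obtain ⟨_, -, h⟩ := Finset.mem_image.mp (vars_rename _ q hj)
  cases h

lemma pderiv_X_sq [CharP R 2] (i j : σ) : pderiv i (X j ^ 2 : MvPolynomial σ R) = 0 := by
  rw [pderiv_pow, Nat.cast_ofNat, CharTwo.two_eq_zero, zero_mul, zero_mul]

end CommRing

end MvPolynomial

/-- Let `char k = 2` and let `f = ∑_j ℓ_j(y) x_j² + g(y)` be a homogeneous cubic in
variables `x_1,…,x_{m+1}, y_1,…,y_r`, where the `ℓ_j` are linear forms and `g` is a
cubic form in the `y`-variables, with at least one `x`-variable present.  Then the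
hypersurface `X = {f = 0} ⊂ ℙ^{n+1}` is singular over the algebraic closure: there is
a nonzero point where `f` and all its partial derivatives vanish. -/
theorem char2_special_cubic_singular
    {k : Type*} [Field k] [CharP k 2] {m r : ℕ}
    (ℓ : Fin (m + 1) → MvPolynomial (Fin r) k) (hℓ : ∀ j, (ℓ j).IsHomogeneous 1)
    (g : MvPolynomial (Fin r) k) (hg : g.IsHomogeneous 3)
    (f : MvPolynomial (Fin (m + 1) ⊕ Fin r) k)
    (hf : f = (∑ j, MvPolynomial.rename Sum.inr (ℓ j) * MvPolynomial.X (Sum.inl j) ^ 2) +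
      MvPolynomial.rename Sum.inr g) :
    ∃ p : Fin (m + 1) ⊕ Fin r → AlgebraicClosure k, p ≠ 0 ∧
      MvPolynomial.eval p (MvPolynomial.map (algebraMap k (AlgebraicClosure k)) f) = 0 ∧
      ∀ i, MvPolynomial.eval p (MvPolynomial.pderiv i
        (MvPolynomial.map (algebraMap k (AlgebraicClosure k)) f)) = 0 := by
  set K := AlgebraicClosure k
  have : CharP K 2 := charP_of_injective_algebraMap (algebraMap k K).injective 2
  have hf₃ : (map (algebraMap k K) f).IsHomogeneous 3 := by
    refine IsHomogeneous.map ?_ _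
    rw [hf]
    exact (IsHomogeneous.sum _ _ _ fun j _ =>
      (hℓ j).rename_isHomogeneous.mul (isHomogeneous_X_pow _ _)).add hg.rename_isHomogeneous
  have hx : ∀ j, pderiv (Sum.inl j) f = 0 := by
    intro j
    simp only [hf, map_add, map_sum, pderiv_mul, pderiv_inl_rename_inr, pderiv_X_sq, zero_mul,
      mul_zero, add_zero, Finset.sum_const_zero]
  obtain ⟨p, hp, hy⟩ := exists_ne_forall_eval_eq_zero
    (fun i : Fin r => pderiv (Sum.inr i) (map (algebraMap k K) f)) (by simp) (a := 0)
    fun i => hf₃.eval_zero_pderiv (by norm_num) _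
  have hgrad : ∀ i, eval p (pderiv i (map (algebraMap k K) f)) = 0 := by
    rintro (j | i)
    · simp [pderiv_map, hx]
    · exact hy i
  have h₃ : ((3 : ℕ) : K) ≠ 0 := by
    rw [CharP.cast_eq_mod K 2]
    norm_num
  exact ⟨p, hp, hf₃.eval_eq_zero_of_forall_eval_pderiv_eq_zero h₃ hgrad, hgrad⟩
end

section
/- Let X ⊂ A^{n+1} be a cubic hypersurface F = L + Q + C = 0 (L linear, Q quadratic, C cubic homogeneous parts) smooth at the origin (L ≠ 0), and X irreducible. Then for generic direction u, the quadratic equation L(u,1) + τ Q(u,1) + τ^2 C(u,1) = 0, whose roots parametrize the two further intersection points of the line τ ↦ (τu, τ) with X, is irreducible over the field k(u_1,...,u_n). -/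
/-!
Substituting `x = τ • (u, 1)` (the chart `x_n ≠ 0` of the blow-up of the origin) sends a form
`G` of degree `d` to `τ ^ d * G(u, 1)`, so it sends `F = L + Q + C` to `τ * P` with
`P = L(u, 1) + Q(u, 1) τ + C(u, 1) τ²` in `k[u][τ]`. The substitution is injective, and becomes
surjective once `τ` is inverted; hence the prime `F`, which does not divide `x_n`, stays prime in
`k[u][τ, τ⁻¹]`. So in a factorization of `P` in `k[u][τ]` one factor divides a power of `τ`, and
it is a unit because `τ ∤ P` (as `L ≠ 0`). Being irreducible of degree 2, `P` is primitive, and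
Gauss's lemma makes it irreducible over `k(u)`.
-/

theorem irreducible_of_map_prime_eq_mul {R S F : Type*} [CommSemiring R] [CommSemiring S]
    [IsDomain S] [FunLike F R S] [RingHomClass F R S] {φ : F} (hφ : Function.Injective φ)
    {x p : R} {q : S}
    (hx : Prime (φ x)) (hloc : ∀ s, ∃ N r, φ x ^ N * s = φ r)
    (hp : Prime p) (hpq : φ p = φ x * q) (hq : ¬ IsUnit q) (hxq : ¬ φ x ∣ q) :
    Irreducible q := by
  have hq0 : q ≠ 0 := by
    rintro rfl
    rw [mul_zero, map_eq_zero_iff φ hφ] at hpq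
    exact hp.ne_zero hpq
  have hpx : ¬ p ∣ x := by
    rintro ⟨w, rfl⟩
    refine hq (IsUnit.of_mul_eq_one (φ w) (mul_left_cancel₀ hx.ne_zero ?_))
    rw [mul_one, ← mul_assoc, ← hpq, ← map_mul]
  have unit_of_dvd : ∀ {g h : S} {G : R} {N : ℕ},
      q = g * h → φ x ^ N * g = φ G → p ∣ G → IsUnit h := by
    rintro g h G N rfl hG ⟨G', rfl⟩
    have hxN : φ x ^ N = h * (φ x * φ G') := by
      apply mul_right_cancel₀ (left_ne_zero_of_mul hq0)
      rw [hG, map_mul, hpq]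
      ring
    obtain ⟨_ | i, -, hi⟩ := (dvd_prime_pow hx N).1 (Dvd.intro _ hxN.symm)
    · exact associated_one_iff_isUnit.mp (by simpa using hi)
    · exact absurd (((dvd_pow_self _ i.succ_ne_zero).trans hi.symm.dvd).mul_left g) hxq
  refine ⟨hq, fun g h hgh => ?_⟩
  obtain ⟨N, G, hG⟩ := hloc g
  obtain ⟨M, H, hH⟩ := hloc h
  have hGH : x ^ (N + M) * p = x * (G * H) := hφ (by
    simp only [map_mul, map_pow, hpq, ← hG, ← hH, hgh]
    ring)
  have hpGH : p ∣ G * H := (hp.dvd_or_dvd (hGH ▸ dvd_mul_left p _)).resolve_left hpx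
  rcases hp.dvd_or_dvd hpGH with hpG | hpH
  · exact Or.inr (unit_of_dvd hgh hG hpG)
  · exact Or.inl (unit_of_dvd (hgh.trans (mul_comm g h)) hH hpH)

namespace MvPolynomial

theorem IsHomogeneous.eval₂_const_mul {σ R S : Type*} [CommSemiring R] [CommSemiring S]
    {φ : MvPolynomial σ R} {d : ℕ} (hφ : φ.IsHomogeneous d) (f : R →+* S) (g : σ → S) (c : S) :
    MvPolynomial.eval₂ f (fun i => c * g i) φ = c ^ d * MvPolynomial.eval₂ f g φ := by
  rw [eval₂_eq, eval₂_eq, Finset.mul_sum]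
  refine Finset.sum_congr rfl fun β hβ => ?_
  simp_rw [mul_pow, Finset.prod_mul_distrib, Finset.prod_pow_eq_pow_sum,
    ← hφ.degree_eq_sum_deg_support hβ]
  ring

section CommSemiring

variable {R : Type*} [CommSemiring R] {n : ℕ}

noncomputable def dehomogenize : MvPolynomial (Fin (n + 1)) R →ₐ[R] MvPolynomial (Fin n) R :=
  aeval (Fin.snoc X 1)

theorem eval_map_algebraMap_dehomogenize {A : Type*} [CommSemiring A] [Algebra R A]
    [Algebra (MvPolynomial (Fin n) R) A] [IsScalarTower R (MvPolynomial (Fin n) R) A]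
    (f : MvPolynomial (Fin (n + 1)) R) :
    eval (algebraMap _ A ∘ Fin.snoc (X : Fin n → MvPolynomial (Fin n) R) 1)
      (map (algebraMap R A) f) =
      algebraMap _ A (dehomogenize f) := by
  rw [dehomogenize, ← aeval_algebraMap_apply, aeval_def, eval_map]

noncomputable def blowupChart :
    MvPolynomial (Fin (n + 1)) R →ₐ[R] Polynomial (MvPolynomial (Fin n) R) :=
  aeval fun i => Polynomial.X * Polynomial.C (Fin.snoc X 1 i)

theorem blowupChart_X_last :
    blowupChart (X (Fin.last n) : MvPolynomial (Fin (n + 1)) R) = Polynomial.X := by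
  simp [blowupChart]

theorem blowupChart_X_castSucc (i : Fin n) :
    blowupChart (X i.castSucc : MvPolynomial (Fin (n + 1)) R) =
      Polynomial.X * Polynomial.C (X i) := by
  simp [blowupChart]

theorem blowupChart_of_isHomogeneous {G : MvPolynomial (Fin (n + 1)) R} {d : ℕ}
    (hG : G.IsHomogeneous d) :
    blowupChart G = Polynomial.X ^ d * Polynomial.C (dehomogenize G) := by
  rw [blowupChart, aeval_def, hG.eval₂_const_mul, ← aeval_def, dehomogenize,
    ← Polynomial.algebraMap_eq, ← aeval_algebraMap_apply]
  rfl

theorem exists_X_pow_mul_eq_blowupChart (s : Polynomial (MvPolynomial (Fin n) R)) :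
    ∃ N r, Polynomial.X ^ N * s = blowupChart r := by
  let M := {s : Polynomial (MvPolynomial (Fin n) R) |
    ∃ N r, Polynomial.X ^ N * s = blowupChart r}
  have hadd : ∀ s ∈ M, ∀ s' ∈ M, s + s' ∈ M := by
    rintro s ⟨N, r, hr⟩ s' ⟨N', r', hr'⟩
    refine ⟨N + N', X (Fin.last n) ^ N' * r + X (Fin.last n) ^ N * r', ?_⟩
    simp only [map_add, map_mul, map_pow, blowupChart_X_last, ← hr, ← hr']
    ring
  have hmul : ∀ s ∈ M, ∀ s' ∈ M, s * s' ∈ M := by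
    rintro s ⟨N, r, hr⟩ s' ⟨N', r', hr'⟩
    refine ⟨N + N', r * r', ?_⟩
    simp only [map_mul, ← hr, ← hr']
    ring
  have hC : ∀ a, Polynomial.C a ∈ M := by
    intro a
    induction a using MvPolynomial.induction_on with
    | C c => exact ⟨0, C c, by simp⟩
    | add p q hp hq => simpa using hadd _ hp _ hq
    | mul_X p i hp =>
      rw [Polynomial.C_mul]
      exact hmul _ hp _ ⟨1, X i.castSucc, by rw [blowupChart_X_castSucc, pow_one]⟩
  induction s using Polynomial.induction_on with
  | C a => exact hC a
  | add p q hp hq => exact hadd _ hp _ hq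
  | monomial m a hm =>
    rw [pow_succ, ← mul_assoc]
    exact hmul _ hm _ ⟨0, X (Fin.last n), by rw [blowupChart_X_last, pow_zero, one_mul]⟩

end CommSemiring

section Domain

variable {R : Type*} [CommRing R] [IsDomain R] {n : ℕ}

theorem blowupChart_injective :
    Function.Injective (blowupChart : MvPolynomial (Fin (n + 1)) R →ₐ[R] _) := by
  let K := FractionRing (MvPolynomial (Fin (n + 1)) R)
  let z := algebraMap (MvPolynomial (Fin (n + 1)) R) K (X (Fin.last n))
  have hz : z ≠ 0 := by simp [z, X_ne_zero]
  -- the inverse substitution `u_i = x_i / x_n`, `τ = x_n`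
  let ψ : Polynomial (MvPolynomial (Fin n) R) →+* K := Polynomial.eval₂RingHom
    (eval₂Hom (algebraMap R K) fun i =>
      algebraMap _ K (X i.castSucc : MvPolynomial (Fin (n + 1)) R) / z) z
  have hψ : ψ.comp blowupChart.toRingHom = algebraMap _ K := by
    refine ringHom_ext (fun r => ?_) (fun i => ?_)
    · simp [ψ, blowupChart, ← MvPolynomial.algebraMap_eq,
        IsScalarTower.algebraMap_apply R (MvPolynomial (Fin (n + 1)) R) K]
    · induction i using Fin.lastCases <;> simp [ψ, blowupChart, div_mul_cancel₀ _ hz, z]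
  have h := IsFractionRing.injective (MvPolynomial (Fin (n + 1)) R) K
  rw [← hψ, RingHom.coe_comp] at h
  exact h.of_comp

theorem dehomogenize_ne_zero {G : MvPolynomial (Fin (n + 1)) R} {d : ℕ}
    (hG : G.IsHomogeneous d) (hG0 : G ≠ 0) : dehomogenize G ≠ 0 := by
  intro h
  apply hG0
  apply blowupChart_injective
  rw [blowupChart_of_isHomogeneous hG, h, map_zero, mul_zero, map_zero]

end Domain

end MvPolynomial

/-- Let `X ⊂ 𝔸^{n+1}` be an irreducible cubic hypersurface `F = L + Q + C = 0` (with
`L, Q, C` the homogeneous parts of degrees 1, 2, 3), smooth at the origin (`L ≠ 0`).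
Over the field `K = k(u_1,…,u_n)` of a generic direction `u`, the quadratic equation
`L(u,1) + τ·Q(u,1) + τ²·C(u,1) = 0` — whose roots parametrize the two further
intersection points of the line `τ ↦ (τu, τ)` with `X` — is irreducible. -/
theorem generic_line_quadratic_irreducible
    {k : Type*} [Field k] {n : ℕ}
    (L Q C : MvPolynomial (Fin (n + 1)) k)
    (hL : L.IsHomogeneous 1) (hQ : Q.IsHomogeneous 2) (hC : C.IsHomogeneous 3)
    (hL0 : L ≠ 0) (hC0 : C ≠ 0)
    (hirr : Irreducible (L + Q + C))
    (φ : Fin (n + 1) → FractionRing (MvPolynomial (Fin n) k))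
    (hφ : ∀ i : Fin (n + 1), φ i = if h : (i : ℕ) < n then
      algebraMap (MvPolynomial (Fin n) k) (FractionRing (MvPolynomial (Fin n) k))
        (MvPolynomial.X ⟨i, h⟩) else 1) :
    Irreducible (Polynomial.C (MvPolynomial.eval φ
        (MvPolynomial.map (algebraMap k (FractionRing (MvPolynomial (Fin n) k))) L)) +
      Polynomial.C (MvPolynomial.eval φ
        (MvPolynomial.map (algebraMap k (FractionRing (MvPolynomial (Fin n) k))) Q)) *
        Polynomial.X +
      Polynomial.C (MvPolynomial.eval φ
        (MvPolynomial.map (algebraMap k (FractionRing (MvPolynomial (Fin n) k))) C)) *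
        Polynomial.X ^ 2) := by
  obtain rfl :
      φ = algebraMap _ _ ∘ Fin.snoc (MvPolynomial.X : Fin n → MvPolynomial (Fin n) k) 1 := by
    funext i
    induction i using Fin.lastCases <;> simp [hφ]
  simp only [MvPolynomial.eval_map_algebraMap_dehomogenize]
  let P : Polynomial (MvPolynomial (Fin n) k) :=
    .C L.dehomogenize + .C Q.dehomogenize * .X + .C C.dehomogenize * .X ^ 2
  have hP2 : P.natDegree = 2 := by
    rw [show P = .C C.dehomogenize * .X ^ 2 + .C Q.dehomogenize * .X + .C L.dehomogenize by ring]
    exact Polynomial.natDegree_quadratic (MvPolynomial.dehomogenize_ne_zero hC hC0)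
  have hFP : MvPolynomial.blowupChart (L + Q + C) = Polynomial.X * P := by
    simp only [map_add, MvPolynomial.blowupChart_of_isHomogeneous hL,
      MvPolynomial.blowupChart_of_isHomogeneous hQ, MvPolynomial.blowupChart_of_isHomogeneous hC, P]
    ring
  have hP : Irreducible P := by
    refine irreducible_of_map_prime_eq_mul MvPolynomial.blowupChart_injective
      (x := MvPolynomial.X (Fin.last n)) ?_ ?_ hirr.prime ?_
      (Polynomial.not_isUnit_of_natDegree_pos _ (by omega)) ?_ <;>
      rw [MvPolynomial.blowupChart_X_last]
    · exact Polynomial.prime_X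
    · exact MvPolynomial.exists_X_pow_mul_eq_blowupChart
    · exact hFP
    · simpa [Polynomial.X_dvd_iff, P] using MvPolynomial.dehomogenize_ne_zero hL hL0
  convert (hP.isPrimitive (by omega)).irreducible_iff_irreducible_map_fraction_map
    (K := FractionRing (MvPolynomial (Fin n) k)) |>.mp hP using 1
  simp [P]
end
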